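/- arXiv:2212.13719 — 6 statements merged into one kernel-verified Lean document; each statement's English description precedes it below -/
import Mathlib

section
/- Let n be an even positive integer and let t, m be integers with 1 ≤ m ≤ t. Then h(n,t,m) = Σ_{k=m}^{n/2} C(k−1, m−1)·C(n−2k, t−m), where C(a,b) denotes the binomial coefficient. -/
open Finset
open scoped Classical

/-- Edge set of the natural tight path `P^{(r)}_s` on vertex set `[s] = {1,…,s}`:
all intervals of `r` consecutive integers. -/
def pathEdges (r s : ℕ) : Finset (Finset ℕ) :=
  (Finset.Icc 1 (s - r + 1)).image (fun i => Finset.Icc i (i + r - 1))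

/-- Edge set of the loose path `LP^{(r)}_s`: only the first and last edges. -/
def loosePathEdges (r s : ℕ) : Finset (Finset ℕ) :=
  {Finset.Icc 1 r, Finset.Icc (s - r + 1) s}

/-- `C` is the edge set of a copy in `K^{(r)}_n` of the ordered hypergraph with
vertex set `[s]` and edge set `E`, i.e. the image of `E` under a strictly
increasing map `[s] → [n]`. -/
def IsCopy (n s : ℕ) (E : Finset (Finset ℕ)) (C : Finset (Finset ℕ)) : Prop :=
  ∃ f : ℕ → ℕ, StrictMonoOn f ↑(Finset.Icc 1 s) ∧
    (∀ v ∈ Finset.Icc 1 s, f v ∈ Finset.Icc 1 n) ∧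
    C = E.image (fun e => e.image f)

/-- A transversal: a set `T` of `r`-element subsets of `[n]` meeting every copy. -/
def IsTransversal (n r s : ℕ) (E : Finset (Finset ℕ)) (T : Finset (Finset ℕ)) : Prop :=
  T ⊆ (Finset.Icc 1 n).powersetCard r ∧
  ∀ C : Finset (Finset ℕ), IsCopy n s E C → ∃ e ∈ C, e ∈ T

/-- The transversal number `τ(n,H)`. -/
noncomputable def tau (n r s : ℕ) (E : Finset (Finset ℕ)) : ℕ :=
  sInf {m | ∃ T : Finset (Finset ℕ), IsTransversal n r s E T ∧ T.card = m}

/-- A packing: an edge-disjoint family of copies. -/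
def IsPacking (n s : ℕ) (E : Finset (Finset ℕ)) (P : Finset (Finset (Finset ℕ))) : Prop :=
  (∀ C ∈ P, IsCopy n s E C) ∧
  ∀ C ∈ P, ∀ C' ∈ P, C ≠ C' → Disjoint C C'

/-- The packing number `ν(n,H)`. -/
noncomputable def nu (n s : ℕ) (E : Finset (Finset ℕ)) : ℕ :=
  sSup {m | ∃ P : Finset (Finset (Finset ℕ)), IsPacking n s E P ∧ P.card = m}

/-- The ordered Turán number: maximum number of edges of a subgraph of
`K^{(r)}_n` containing no copy of the hypergraph with edge set `E`. -/
noncomputable def exNum (n r s : ℕ) (E : Finset (Finset ℕ)) : ℕ :=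
  sSup {m | ∃ G ⊆ (Finset.Icc 1 n).powersetCard r,
    (∀ C : Finset (Finset ℕ), IsCopy n s E C → ¬ C ⊆ G) ∧ G.card = m}

/-- `S ⊆ [n]` is `m`-left-biased. -/
def LeftBiased (n m : ℕ) (S : Finset ℕ) : Prop :=
  ∃ u ≤ n / 2, (S ∩ Finset.Icc 1 u).card = m ∧ S ∩ Finset.Icc (n + 1 - u) n = ∅

/-- `h(n,t,m)`: the number of `m`-left-biased `t`-element subsets of `[n]`. -/
noncomputable def hcount (n t m : ℕ) : ℕ :=
  (((Finset.Icc 1 n).powersetCard t).filter (LeftBiased n m)).card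

/-- A fractional transversal. -/
def IsFracTransversal (n r s : ℕ) (E : Finset (Finset ℕ)) (w : Finset ℕ → ℝ) : Prop :=
  (∀ e ∈ (Finset.Icc 1 n).powersetCard r, 0 ≤ w e) ∧
  ∀ C : Finset (Finset ℕ), IsCopy n s E C → 1 ≤ ∑ e ∈ C, w e

/-- The fractional transversal number `τ*(n,H)`. -/
noncomputable def tauStar (n r s : ℕ) (E : Finset (Finset ℕ)) : ℝ :=
  sInf {x : ℝ | ∃ w : Finset ℕ → ℝ, IsFracTransversal n r s E w ∧
    x = ∑ e ∈ (Finset.Icc 1 n).powersetCard r, w e}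

/-- A `k`-edge-labeling of the ordered complete graph on `[n]`. -/
def IsLabeling (n k : ℕ) (φ : ℕ → ℕ → ℕ) : Prop :=
  ∀ u v : ℕ, u ∈ Finset.Icc 1 n → v ∈ Finset.Icc 1 n → u < v → φ u v ∈ Finset.Icc 1 k

/-- The number of good triples `u < v < w` in `[n]` (those with `φ(uv) < φ(vw)`). -/
def goodCount (n : ℕ) (φ : ℕ → ℕ → ℕ) : ℕ :=
  (((Finset.Icc 1 n) ×ˢ (Finset.Icc 1 n) ×ˢ (Finset.Icc 1 n)).filter
    (fun p => p.1 < p.2.1 ∧ p.2.1 < p.2.2 ∧ φ p.1 p.2.1 < φ p.2.1 p.2.2)).card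

/-- The number of bad triples `u < v < w` in `[n]` (those with `φ(uv) ≥ φ(vw)`). -/
def badCount (n : ℕ) (φ : ℕ → ℕ → ℕ) : ℕ :=
  (((Finset.Icc 1 n) ×ˢ (Finset.Icc 1 n) ×ˢ (Finset.Icc 1 n)).filter
    (fun p => p.1 < p.2.1 ∧ p.2.1 < p.2.2 ∧ ¬ φ p.1 p.2.1 < φ p.2.1 p.2.2)).card

/-- `f(n,k)`: the maximum number of good triples over all `k`-edge-labelings of `[n]`. -/
noncomputable def fmax (n k : ℕ) : ℕ :=
  sSup {m | ∃ φ : ℕ → ℕ → ℕ, IsLabeling n k φ ∧ goodCount n φ = m}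

/-- A labeling is monotone if `φ(uv) ≤ φ(vw)` whenever `u < v < w` in `[n]`. -/
def IsMonotone (n : ℕ) (φ : ℕ → ℕ → ℕ) : Prop :=
  ∀ u v w : ℕ, u ∈ Finset.Icc 1 n → v ∈ Finset.Icc 1 n → w ∈ Finset.Icc 1 n →
    u < v → v < w → φ u v ≤ φ v w

/-- `Φ_L(v) = max{φ(uv) : u < v}`, with `Φ_L(1) = 0`. -/
def PhiL (φ : ℕ → ℕ → ℕ) (v : ℕ) : ℕ := (Finset.Ico 1 v).sup (fun u => φ u v)

/-- `Φ_R(v) = min{φ(vw) : v < w ≤ n}`, with `Φ_R(n) = k+1`. -/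
noncomputable def PhiR (n k : ℕ) (φ : ℕ → ℕ → ℕ) (v : ℕ) : ℕ :=
  if v = n then k + 1 else sInf {m | ∃ w ∈ Finset.Ioc v n, φ v w = m}

/-- `X_i = {v ∈ [n] : Φ_L(v) = i}`. -/
def XL (n : ℕ) (φ : ℕ → ℕ → ℕ) (i : ℕ) : Finset ℕ :=
  (Finset.Icc 1 n).filter (fun v => PhiL φ v = i)

/-- `X̂_i = {v ∈ [n] : Φ_R(v) = i}`. -/
noncomputable def XR (n k : ℕ) (φ : ℕ → ℕ → ℕ) (i : ℕ) : Finset ℕ :=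
  (Finset.Icc 1 n).filter (fun v => PhiR n k φ v = i)

/-!
An `m`-left-biased set `S` is classified by its `m`-th smallest element `k`: taking `u = k` in
the definition shows that `S` is `m`-left-biased exactly when `k ≤ n / 2` and `S ⊆ [1, n - k]`.
Such an `S` consists of `m - 1` elements of `[1, k - 1]`, the element `k`, and `t - m` elements
of `[k + 1, n - k]`, which gives the summand `C(k - 1, m - 1) · C(n - 2k, t - m)`.
-/

theorem Finset.card_filter_powersetCard_inter_mem {α : Type*} [DecidableEq α] {s u : Finset α}
    (hsu : Disjoint s u) {𝒜 : Finset (Finset α)} {i r : ℕ} (h𝒜 : 𝒜 ⊆ s.powersetCard i)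
    (hir : i ≤ r) :
    #{S ∈ (s ∪ u).powersetCard r | S ∩ s ∈ 𝒜} = #𝒜 * (#u).choose (r - i) := by
  have union_inter {P Q s' u' : Finset α} (hsu' : Disjoint s' u') (hP : P ⊆ s') (hQ : Q ⊆ u') :
      (P ∪ Q) ∩ s' = P := by
    rw [union_inter_distrib_right, inter_eq_left.2 hP,
      disjoint_iff_inter_eq_empty.1 (disjoint_of_subset_left hQ hsu'.symm), union_empty]
  rw [← card_powersetCard, ← card_product]
  refine card_nbij' (fun S => (S ∩ s, S ∩ u)) (fun p => p.1 ∪ p.2) ?_ ?_ ?_ ?_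
  · intro S hS
    simp only [mem_coe, mem_filter, mem_powersetCard] at hS
    obtain ⟨⟨hSsu, hScard⟩, hSs⟩ := hS
    have hsplit : #(S ∩ s) + #(S ∩ u) = #S := by
      rw [← card_union_of_disjoint (hsu.mono inter_subset_right inter_subset_right),
        ← inter_union_distrib_left, inter_eq_left.2 hSsu]
    rw [(mem_powersetCard.1 (h𝒜 hSs)).2, hScard] at hsplit
    simp only [coe_product, Set.mem_prod, mem_coe, mem_powersetCard]
    exact ⟨hSs, inter_subset_right, by omega⟩
  · rintro ⟨P, Q⟩ hPQ
    simp only [coe_product, Set.mem_prod, mem_coe, mem_powersetCard] at hPQ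
    obtain ⟨hP, hQ, hQcard⟩ := hPQ
    obtain ⟨hPs, hPcard⟩ := mem_powersetCard.1 (h𝒜 hP)
    simp only [mem_coe, mem_filter, mem_powersetCard]
    refine ⟨⟨union_subset_union hPs hQ, ?_⟩, ?_⟩
    · rw [card_union_of_disjoint (hsu.mono hPs hQ), hPcard, hQcard]
      omega
    · rwa [union_inter hsu hPs hQ]
  · intro S hS
    simp only [mem_coe, mem_filter, mem_powersetCard] at hS
    dsimp only
    rw [← inter_union_distrib_left, inter_eq_left.2 hS.1.1]
  · rintro ⟨P, Q⟩ hPQ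
    simp only [coe_product, Set.mem_prod, mem_coe, mem_powersetCard] at hPQ
    have hPs := (mem_powersetCard.1 (h𝒜 hPQ.1)).1
    dsimp only
    rw [union_inter hsu hPs hPQ.2.1, union_comm, union_inter hsu.symm hPQ.2.1 hPs]

theorem strictMonoOn_card_inter_Icc_one (S : Finset ℕ) :
    StrictMonoOn (fun k => #(S ∩ Icc 1 k)) S := by
  intro a _ b hb hab
  refine card_lt_card ((ssubset_iff_of_subset
    (inter_subset_inter_left (Icc_subset_Icc_right hab.le))).2 ⟨b, ?_, fun h => ?_⟩)
  · exact mem_inter.2 ⟨hb, mem_Icc.2 ⟨by omega, le_rfl⟩⟩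
  · simp only [mem_inter, mem_Icc] at h
    omega

theorem leftBiased_iff {n m : ℕ} {S : Finset ℕ} (hS : S ⊆ Icc 1 n) (hm : 1 ≤ m) :
    LeftBiased n m S ↔ ∃ k ∈ Icc m (n / 2), S ⊆ Icc 1 (n - k) ∧ k ∈ S ∧ #(S ∩ Icc 1 k) = m := by
  constructor
  · rintro ⟨u, hu, hcard, hempty⟩
    have hne : (S ∩ Icc 1 u).Nonempty := card_pos.1 (by omega)
    obtain ⟨hkS, hk⟩ := mem_inter.1 ((S ∩ Icc 1 u).max'_mem hne)
    set k := (S ∩ Icc 1 u).max' hne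
    have hcut : S ∩ Icc 1 k = S ∩ Icc 1 u := by
      refine Subset.antisymm (inter_subset_inter_left (Icc_subset_Icc_right (mem_Icc.1 hk).2))
        fun x hx => mem_inter.2 ⟨(mem_inter.1 hx).1, mem_Icc.2 ⟨?_, le_max' _ x hx⟩⟩
      exact (mem_Icc.1 (mem_inter.1 hx).2).1
    have hmk : m ≤ k := by
      calc m = #(S ∩ Icc 1 k) := by rw [hcut, hcard]
        _ ≤ #(Icc 1 k) := card_le_card inter_subset_right
        _ = k := Nat.card_Icc 1 k
    refine ⟨k, mem_Icc.2 ⟨hmk, (mem_Icc.1 hk).2.trans hu⟩, fun x hx => ?_, hkS, hcut ▸ hcard⟩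
    have hxn := mem_Icc.1 (hS hx)
    have hxu : x ∉ Icc (n + 1 - u) n := fun h => notMem_empty x (hempty ▸ mem_inter.2 ⟨hx, h⟩)
    simp only [mem_Icc] at hk hxu ⊢
    omega
  · rintro ⟨k, hk, hSk, -, hcard⟩
    refine ⟨k, (mem_Icc.1 hk).2, hcard, eq_empty_of_forall_notMem fun x hx => ?_⟩
    obtain ⟨hxS, hx⟩ := mem_inter.1 hx
    have := mem_Icc.1 (hSk hxS)
    simp only [mem_Icc] at hx hk
    omega

theorem card_filter_powersetCard_Icc_mem_card_inter {N t m k : ℕ} (hk : k ∈ Icc 1 N)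
    (hm : 1 ≤ m) (hmt : m ≤ t) :
    #{S ∈ (Icc 1 N).powersetCard t | k ∈ S ∧ #(S ∩ Icc 1 k) = m} =
      (k - 1).choose (m - 1) * (N - k).choose (t - m) := by
  obtain ⟨hk1, hkN⟩ := mem_Icc.1 hk
  have hfirst : #{P ∈ (Icc 1 k).powersetCard m | {k} ⊆ P} = (k - 1).choose (m - 1) := by
    simpa using card_filter_powersetCard_subset {k} (Icc 1 k) m (by simpa) (by simpa)
  rw [← hfirst, ← Nat.card_Ioc k N, ← card_filter_powersetCard_inter_mem
    (disjoint_left.2 fun x h1 h2 => by simp only [mem_Icc, mem_Ioc] at h1 h2; omega)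
    (filter_subset _ _) hmt]
  have hsplit : Icc 1 k ∪ Ioc k N = Icc 1 N := by
    rw [← coe_inj, coe_union, coe_Icc, coe_Ioc, coe_Icc, Set.Icc_union_Ioc_eq_Icc hk1 hkN]
  rw [hsplit]
  refine congrArg card (filter_congr fun S _ => ?_)
  simp only [mem_filter, mem_powersetCard, singleton_subset_iff, mem_inter, mem_Icc,
    inter_subset_right, true_and, hk1, le_rfl, and_true]
  exact and_comm

theorem stmt5_general (n t m : ℕ) (h1 : 1 ≤ m) (hmt : m ≤ t) :
    hcount n t m =
      ∑ k ∈ Finset.Icc m (n / 2), (k - 1).choose (m - 1) * (n - 2 * k).choose (t - m) := by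
  set F : ℕ → Finset (Finset ℕ) :=
    fun k => {S ∈ (Icc 1 (n - k)).powersetCard t | k ∈ S ∧ #(S ∩ Icc 1 k) = m}
  have hsplit : ((Icc 1 n).powersetCard t).filter (LeftBiased n m) = (Icc m (n / 2)).biUnion F := by
    ext S
    simp only [F, mem_filter, mem_powersetCard, mem_biUnion]
    constructor
    · rintro ⟨⟨hS, hcard⟩, hS_biased⟩
      obtain ⟨k, hk, hSk, hkS, hm⟩ := (leftBiased_iff hS h1).1 hS_biased
      exact ⟨k, hk, ⟨hSk, hcard⟩, hkS, hm⟩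
    · rintro ⟨k, hk, ⟨hSk, hcard⟩, hkS, hm⟩
      have hS := hSk.trans (Icc_subset_Icc_right (n.sub_le k))
      exact ⟨⟨hS, hcard⟩, (leftBiased_iff hS h1).2 ⟨k, hk, hSk, hkS, hm⟩⟩
  have hdisj : (Icc m (n / 2) : Set ℕ).PairwiseDisjoint F := by
    intro k _ k' _ hne
    refine disjoint_left.2 fun S hS hS' => hne ?_
    obtain ⟨-, hkS, hm⟩ := mem_filter.1 hS
    obtain ⟨-, hkS', hm'⟩ := mem_filter.1 hS'
    exact (strictMonoOn_card_inter_Icc_one S).injOn hkS hkS' (hm.trans hm'.symm)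
  rw [hcount, hsplit, card_biUnion hdisj]
  refine sum_congr rfl fun k hk => ?_
  have hk := mem_Icc.1 hk
  rw [card_filter_powersetCard_Icc_mem_card_inter (mem_Icc.2 (by omega)) h1 hmt, Nat.sub_sub,
    ← two_mul]

/-- For even `n > 0` and `1 ≤ m ≤ t`,
`h(n,t,m) = Σ_{k=m}^{n/2} C(k-1, m-1)·C(n-2k, t-m)`. -/
theorem stmt5 (n t m : ℕ) (hn : 0 < n) (hev : Even n) (h1 : 1 ≤ m) (hmt : m ≤ t) :
    hcount n t m =
      ∑ k ∈ Finset.Icc m (n / 2), (k - 1).choose (m - 1) * (n - 2 * k).choose (t - m) :=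
  stmt5_general n t m h1 hmt
end

section
/- Let r and s be integers with 2 ≤ r ≤ s such that r divides s, let k = s/r, and let n be a positive integer divisible by k. Then ν(n, P^{(r)}_s) ≥ C(n/k, r), where C(n/k, r) is the binomial coefficient. -/
open Finset
open scoped Classical

/-!
Let `m = n / k`, cut `[n]` into `k` consecutive blocks of length `m` and the path's vertex set
`[kr]` into `k` consecutive blocks of length `r`. For an `r`-subset `A = {a₀ < ⋯ < a_{r-1}}` of
`[m]`, send the `t`-th vertex of the `j`-th path block to the vertex `j m + a_t`. Every edge of the
path consists of `r` consecutive vertices and so meets each residue class mod `r` once; hence every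
edge of the copy reduces mod `m` to `A` itself. Copies built from different sets `A` therefore
share no edge, which gives `C(m, r)` edge-disjoint copies.
-/

def blockMap (r m : ℕ) (a : ℕ → ℕ) (w : ℕ) : ℕ := w / r * m + a (w % r)

section BlockMap

variable {r m : ℕ} {a : ℕ → ℕ}

lemma blockMap_mem_Icc (hr : 0 < r) (ha_mem : ∀ t < r, a t ∈ Icc 1 m) (w : ℕ) :
    blockMap r m a w ∈ Icc 1 ((w / r + 1) * m) := by
  have := mem_Icc.mp (ha_mem _ (Nat.mod_lt w hr))
  rw [mem_Icc, blockMap, add_one_mul]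
  omega

lemma strictMono_blockMap (hr : 0 < r) (ha : StrictMonoOn a (Set.Iio r))
    (ha_mem : ∀ t < r, a t ∈ Icc 1 m) : StrictMono (blockMap r m a) := by
  intro u v huv
  rcases (Nat.div_le_div_right (c := r) huv.le).eq_or_lt with hq | hq
  · have hmod : u % r < v % r := by
      have hu := Nat.div_add_mod u r
      have hv := Nat.div_add_mod v r
      rw [hq] at hu
      omega
    simp only [blockMap, hq]
    exact Nat.add_lt_add_left (ha (Nat.mod_lt u hr) (Nat.mod_lt v hr) hmod) _
  · calc blockMap r m a u ≤ (u / r + 1) * m := (mem_Icc.mp (blockMap_mem_Icc hr ha_mem u)).2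
      _ ≤ v / r * m := Nat.mul_le_mul_right m hq
      _ < blockMap r m a v := by
        have := mem_Icc.mp (ha_mem _ (Nat.mod_lt v hr))
        rw [blockMap]; omega

lemma blockMap_sub_one_mod (hr : 0 < r) (ha_mem : ∀ t < r, a t ∈ Icc 1 m) (w : ℕ) :
    (blockMap r m a w - 1) % m + 1 = a (w % r) := by
  have := mem_Icc.mp (ha_mem _ (Nat.mod_lt w hr))
  rw [blockMap, show w / r * m + a (w % r) - 1 = a (w % r) - 1 + w / r * m by omega,
    Nat.add_mul_mod_self_right, Nat.mod_eq_of_lt (by omega)]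
  omega

lemma image_sub_one_mod_image_blockMap_Ico (hr : 0 < r) (ha_mem : ∀ t < r, a t ∈ Icc 1 m)
    (i : ℕ) :
    ((Ico i (i + r)).image (blockMap r m a)).image (fun x => (x - 1) % m + 1) =
      (range r).image a := by
  rw [image_image, ← Nat.image_Ico_mod i r, image_image]
  exact image_congr fun w _ => blockMap_sub_one_mod hr ha_mem w

end BlockMap

namespace Finset

variable (A : Finset ℕ)

lemma finite_ofPred_mem : (Set.ofPred (· ∈ A)).Finite := A.finite_toSet

lemma card_toFinset_finite_ofPred_mem : #(finite_ofPred_mem A).toFinset = #A := by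
  simp

lemma strictMonoOn_nth_mem : StrictMonoOn (Nat.nth (· ∈ A)) (Set.Iio #A) := by
  simpa only [card_toFinset_finite_ofPred_mem] using Nat.nth_strictMonoOn (finite_ofPred_mem A)

lemma nth_mem_of_lt_card {t : ℕ} (ht : t < #A) : Nat.nth (· ∈ A) t ∈ A :=
  Nat.nth_mem_of_lt_card (finite_ofPred_mem A) (by rwa [card_toFinset_finite_ofPred_mem])

lemma image_range_nth_mem : (range #A).image (Nat.nth (· ∈ A)) = A := by
  rw [← coe_inj, coe_image, coe_range]
  have h := Nat.image_nth_Iio_card (finite_ofPred_mem A)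
  rwa [card_toFinset_finite_ofPred_mem] at h

end Finset

lemma image_sub_one_Icc (i r : ℕ) (hi : 1 ≤ i) :
    (Icc i (i + r - 1)).image (· - 1) = Ico (i - 1) (i - 1 + r) := by
  ext x
  simp only [mem_image, mem_Icc, mem_Ico]
  constructor
  · rintro ⟨v, hv, rfl⟩; omega
  · intro hx; exact ⟨x + 1, by omega, by omega⟩

lemma pathEdges_nonempty (r s : ℕ) : (pathEdges r s).Nonempty :=
  (nonempty_Icc.mpr le_add_self).image _

lemma subset_Icc_of_mem_pathEdges {r s : ℕ} {e : Finset ℕ} (hrs : r ≤ s)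
    (he : e ∈ pathEdges r s) : e ⊆ Icc 1 s := by
  obtain ⟨i, hi, rfl⟩ := mem_image.mp he
  rw [mem_Icc] at hi
  exact Icc_subset_Icc hi.1 (by omega)

section Packing

variable {n s : ℕ} {E : Finset (Finset ℕ)}

lemma IsCopy.subset_powerset {C : Finset (Finset ℕ)} (hE : ∀ e ∈ E, e ⊆ Icc 1 s)
    (hC : IsCopy n s E C) : C ⊆ (Icc 1 n).powerset := by
  obtain ⟨f, -, hf, rfl⟩ := hC
  intro e he
  obtain ⟨e', he', rfl⟩ := mem_image.mp he
  rw [mem_powerset, image_subset_iff]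
  exact fun v hv => hf v (hE e' he' hv)

lemma card_le_nu {P : Finset (Finset (Finset ℕ))} (hE : ∀ e ∈ E, e ⊆ Icc 1 s)
    (hP : IsPacking n s E P) : #P ≤ nu n s E := by
  refine le_csSup ⟨#(Icc 1 n).powerset.powerset, ?_⟩ ⟨P, hP, rfl⟩
  rintro _ ⟨Q, hQ, rfl⟩
  exact card_le_card fun C hC => mem_powerset.mpr ((hQ.1 C hC).subset_powerset hE)

end Packing

noncomputable def pathCopy (r m s : ℕ) (A : Finset ℕ) : Finset (Finset ℕ) :=
  (pathEdges r s).image (image fun v => blockMap r m (Nat.nth (· ∈ A)) (v - 1))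

noncomputable def pathPacking (r m s : ℕ) : Finset (Finset (Finset ℕ)) :=
  ((Icc 1 m).powersetCard r).image (pathCopy r m s)

section PathCopy

variable {r m s : ℕ} {A : Finset ℕ}

lemma nth_mem_Icc_of_mem_powersetCard (hA : A ∈ (Icc 1 m).powersetCard r) {t : ℕ}
    (ht : t < r) : Nat.nth (· ∈ A) t ∈ Icc 1 m :=
  (mem_powersetCard.mp hA).1 (A.nth_mem_of_lt_card ((mem_powersetCard.mp hA).2 ▸ ht))

lemma isCopy_pathCopy (hr : 0 < r) (hA : A ∈ (Icc 1 m).powersetCard r) {k n : ℕ}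
    (hs : s ≤ k * r) (hn : k * m ≤ n) : IsCopy n s (pathEdges r s) (pathCopy r m s A) := by
  have hmono := strictMono_blockMap hr ((mem_powersetCard.mp hA).2 ▸ A.strictMonoOn_nth_mem)
    (fun _ => nth_mem_Icc_of_mem_powersetCard hA)
  refine ⟨_, fun u hu v hv huv => hmono ?_, fun v hv => ?_, rfl⟩
  · simp only [coe_Icc, Set.mem_Icc] at hu hv
    omega
  · rw [mem_Icc] at hv
    have hblock : (v - 1) / r + 1 ≤ k := (Nat.div_lt_iff_lt_mul hr).mpr (by omega)
    have hbound := mem_Icc.mp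
      (blockMap_mem_Icc hr (fun _ => nth_mem_Icc_of_mem_powersetCard hA) (v - 1))
    exact mem_Icc.mpr ⟨hbound.1, hbound.2.trans ((Nat.mul_le_mul_right m hblock).trans hn)⟩

lemma image_sub_one_mod_of_mem_pathCopy (hr : 0 < r) (hA : A ∈ (Icc 1 m).powersetCard r)
    {e : Finset ℕ} (he : e ∈ pathCopy r m s A) : e.image (fun x => (x - 1) % m + 1) = A := by
  obtain ⟨_, hedge, rfl⟩ := mem_image.mp he
  obtain ⟨i, hi, rfl⟩ := mem_image.mp hedge
  have hsplit : (Icc i (i + r - 1)).image (fun v => blockMap r m (Nat.nth (· ∈ A)) (v - 1)) =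
      ((Icc i (i + r - 1)).image (· - 1)).image (blockMap r m (Nat.nth (· ∈ A))) := by
    rw [image_image]; rfl
  rw [hsplit, image_sub_one_Icc i r (mem_Icc.mp hi).1,
    image_sub_one_mod_image_blockMap_Ico hr (fun _ => nth_mem_Icc_of_mem_powersetCard hA),
    ← (mem_powersetCard.mp hA).2, A.image_range_nth_mem]

lemma isPacking_pathPacking (hr : 0 < r) {k n : ℕ} (hs : s ≤ k * r) (hn : k * m ≤ n) :
    IsPacking n s (pathEdges r s) (pathPacking r m s) := by
  refine ⟨?_, ?_⟩
  · rintro _ hC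
    obtain ⟨A, hA, rfl⟩ := mem_image.mp hC
    exact isCopy_pathCopy hr hA hs hn
  · rintro _ hC _ hC' hne
    obtain ⟨A, hA, rfl⟩ := mem_image.mp hC
    obtain ⟨B, hB, rfl⟩ := mem_image.mp hC'
    refine disjoint_left.mpr fun e heA heB => hne ?_
    rw [← image_sub_one_mod_of_mem_pathCopy hr hA heA,
      ← image_sub_one_mod_of_mem_pathCopy hr hB heB]

lemma card_pathPacking (hr : 0 < r) : #(pathPacking r m s) = m.choose r := by
  rw [pathPacking, card_image_of_injOn, card_powersetCard, Nat.card_Icc, Nat.add_sub_cancel]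
  intro A hA B hB hAB
  obtain ⟨e, he⟩ : (pathCopy r m s A).Nonempty := (pathEdges_nonempty r s).image _
  rw [← image_sub_one_mod_of_mem_pathCopy hr hA he,
    image_sub_one_mod_of_mem_pathCopy hr hB ((congrArg (e ∈ ·) hAB).mp he)]

end PathCopy

theorem stmt6_general (r s k n : ℕ) (hr : 2 ≤ r) (hrs : r ≤ s) (hdvd : r ∣ s) (hk : k = s / r)
    (hkn : k ∣ n) :
    (n / k).choose r ≤ nu n s (pathEdges r s) := by
  have hr0 : 0 < r := by omega
  have hs : s = k * r := by rw [hk, Nat.div_mul_cancel hdvd]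
  have hn : k * (n / k) = n := Nat.mul_div_cancel' hkn
  rw [← card_pathPacking (s := s) hr0]
  exact card_le_nu (fun _ => subset_Icc_of_mem_pathEdges hrs)
    (isPacking_pathPacking hr0 hs.le hn.le)

/-- If `2 ≤ r ≤ s`, `r ∣ s`, `k = s/r` and `k ∣ n` with `n > 0`, then
`ν(n, P^{(r)}_s) ≥ C(n/k, r)`. -/
theorem stmt6 (r s k n : ℕ) (hr : 2 ≤ r) (hrs : r ≤ s) (hdvd : r ∣ s) (hk : k = s / r)
    (hn : 0 < n) (hkn : k ∣ n) :
    (n / k).choose r ≤ nu n s (pathEdges r s) :=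
  stmt6_general r s k n hr hrs hdvd hk hkn
end

section
/- Let r and s be integers with 2 ≤ r ≤ s such that r divides s, let k = s/r, and let n be a positive integer divisible by k. Then there exists a fractional P^{(r)}_s-transversal of K^{(r)}_n of total weight C(n/k, r); in particular τ*(n, P^{(r)}_s) ≤ C(n/k, r), where C(n/k, r) is the binomial coefficient. -/
open Finset
open scoped Classical

open scoped Classical

/-! The vertex set `[k m]` is cut into `k` consecutive blocks of size `m`, and every `r`-set
inside a single block gets weight `1 / k`; the total weight is `k · C(m, r) / k = C(m, r)`.
A copy of `P^{(r)}_{kr}` has `kr - r + 1` edges, its block index is monotone along the path and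
can increase at most `k - 1` times, and each increase spoils at most `r - 1` consecutive edges.
So at least `kr - r + 1 - (r - 1)(k - 1) = k` edges of the copy lie inside a block. -/

/- Each window `[i, i + d]` on which `G` changes adds at least `1` to
`∑ i < N, (G (i + d) - G i)`, and this sum telescopes to the last `d` values of `G` minus the
first `d`. -/
theorem card_filter_ne_add_le (G : ℕ → ℕ) (N d a b : ℕ)
    (hmono : ∀ i < N, G i ≤ G (i + d)) (ha : ∀ i < d, a ≤ G i)
    (hb : ∀ i < d, G (N + i) ≤ b) :
    #{i ∈ range N | G i ≠ G (i + d)} + d * a ≤ d * b := by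
  have hstep : ∑ i ∈ range N, G i + #{i ∈ range N | G i ≠ G (i + d)} ≤
      ∑ i ∈ range N, G (d + i) := by
    rw [card_filter, ← sum_add_distrib]
    refine sum_le_sum fun i hi => ?_
    have := hmono i (mem_range.mp hi)
    rw [add_comm d i]
    split_ifs <;> omega
  have hfirst := sum_range_add G d N
  have hlast := sum_range_add G N d
  have hlow : d * a ≤ ∑ i ∈ range d, G i := by
    simpa using card_nsmul_le_sum (range d) G a fun i hi => ha i (mem_range.mp hi)
  have hupp : ∑ i ∈ range d, G (N + i) ≤ d * b := by
    simpa using sum_le_card_nsmul (range d) (fun i => G (N + i)) b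
      fun i hi => hb i (mem_range.mp hi)
  rw [add_comm d N] at hfirst
  omega

theorem le_card_filter_eq_add_of_monotoneOn (G : ℕ → ℕ) {k r : ℕ} (hk : 0 < k) (hr : 0 < r)
    (hG : MonotoneOn G (Set.Iio (k * r))) (hlt : ∀ i < k * r, G i < k) :
    k ≤ #{i ∈ range (k * r - r + 1) | G i = G (i + (r - 1))} := by
  have hrk : r ≤ k * r := Nat.le_mul_of_pos_left r hk
  have hbad := card_filter_ne_add_le G (k * r - r + 1) (r - 1) 0 (k - 1)
    (fun i hi => hG (by simp; omega) (by simp; omega) (by omega)) (fun _ _ => Nat.zero_le _)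
    (fun i hi => Nat.le_sub_one_of_lt (hlt _ (by omega)))
  have hsplit := card_filter_add_card_filter_not (s := range (k * r - r + 1))
    (fun i => G i = G (i + (r - 1)))
  have hcount : k * r - r + 1 = (r - 1) * (k - 1) + k := by
    obtain ⟨k, rfl⟩ := Nat.exists_eq_add_of_le' hk
    obtain ⟨r, rfl⟩ := Nat.exists_eq_add_of_le' hr
    simp only [Nat.add_sub_cancel]
    ring_nf
    omega
  rw [card_range] at hsplit
  simp only [ne_eq] at hbad
  omega

def block (m j : ℕ) : Finset ℕ := Icc (j * m + 1) (j * m + m)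

theorem mem_block {m j v : ℕ} (hm : 0 < m) : v ∈ block m j ↔ 1 ≤ v ∧ (v - 1) / m = j := by
  rw [block, mem_Icc, Nat.div_eq_iff hm]
  omega

def blockEdges (k m r : ℕ) : Finset (Finset ℕ) :=
  (range k).biUnion fun j => (block m j).powersetCard r

theorem mem_blockEdges {k m r : ℕ} {e : Finset ℕ} :
    e ∈ blockEdges k m r ↔ ∃ j < k, e ⊆ block m j ∧ #e = r := by
  simp [blockEdges]

theorem blockEdges_subset_powersetCard {k m r : ℕ} :
    blockEdges k m r ⊆ (Icc 1 (k * m)).powersetCard r := by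
  intro e he
  obtain ⟨j, hj, hej, hcard⟩ := mem_blockEdges.mp he
  refine mem_powersetCard.mpr ⟨hej.trans fun v hv => ?_, hcard⟩
  have : (j + 1) * m ≤ k * m := Nat.mul_le_mul_right m hj
  simp only [block, mem_Icc] at hv ⊢
  constructor <;> nlinarith

theorem card_blockEdges {k m r : ℕ} (hm : 0 < m) (hr : 0 < r) :
    #(blockEdges k m r) = k * m.choose r := by
  rw [blockEdges, card_biUnion]
  · simp [block]
  intro i _ j _ hij
  refine disjoint_left.mpr fun e hi hj => ?_
  rw [mem_powersetCard] at hi hj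
  obtain ⟨v, hv⟩ := card_pos.mp (hi.2.trans_gt hr)
  exact hij (((mem_block hm).mp (hi.1 hv)).2.symm.trans ((mem_block hm).mp (hj.1 hv)).2)

noncomputable def blockWeight (k m r : ℕ) (e : Finset ℕ) : ℝ :=
  if e ∈ blockEdges k m r then (k : ℝ)⁻¹ else 0

theorem sum_blockWeight (k m r : ℕ) (t : Finset (Finset ℕ)) :
    ∑ e ∈ t, blockWeight k m r e = #(t ∩ blockEdges k m r) / k := by
  simp [blockWeight, sum_ite_mem, div_eq_mul_inv]

theorem sum_blockWeight_powersetCard {k m r : ℕ} (hk : 0 < k) (hm : 0 < m) (hr : 0 < r) :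
    ∑ e ∈ (Icc 1 (k * m)).powersetCard r, blockWeight k m r e = m.choose r := by
  rw [sum_blockWeight, inter_eq_right.mpr blockEdges_subset_powersetCard,
    card_blockEdges hm hr]
  push_cast
  field_simp

theorem image_Icc_mem_blockEdges {k m r : ℕ} (hm : 0 < m) (hr : 0 < r) {f : ℕ → ℕ}
    (hf : StrictMonoOn f (Icc 1 (k * r)))
    (hfm : ∀ v ∈ Icc 1 (k * r), f v ∈ Icc 1 (k * m)) {t : ℕ} (ht : t + r ≤ k * r)
    (hblock : (f (t + 1) - 1) / m = (f (t + r) - 1) / m) :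
    (Icc (t + 1) (t + r)).image f ∈ blockEdges k m r := by
  have hsub : Icc (t + 1) (t + r) ⊆ Icc 1 (k * r) := Icc_subset_Icc (by omega) ht
  have hfirst := hfm (t + 1) (hsub (by simp; omega))
  rw [mem_Icc] at hfirst
  refine mem_blockEdges.mpr ⟨(f (t + 1) - 1) / m, ?_, fun w hw => ?_, ?_⟩
  · rw [Nat.div_lt_iff_lt_mul hm]
    omega
  · obtain ⟨u, hu, rfl⟩ := mem_image.mp hw
    have hmono := hf.monotoneOn
    have hlo : f (t + 1) ≤ f u :=
      hmono (hsub (by simp; omega)) (hsub hu) (mem_Icc.mp hu).1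
    have hhi : f u ≤ f (t + r) :=
      hmono (hsub hu) (hsub (by simp; omega)) (mem_Icc.mp hu).2
    have h1 : (f (t + 1) - 1) / m ≤ (f u - 1) / m := Nat.div_le_div_right (by omega)
    have h2 : (f u - 1) / m ≤ (f (t + r) - 1) / m := Nat.div_le_div_right (by omega)
    exact (mem_block hm).mpr ⟨by omega, by omega⟩
  · rw [card_image_of_injOn (hf.injOn.mono hsub), Nat.card_Icc]
    omega

theorem Icc_mem_pathEdges {r s t : ℕ} (hr : 0 < r) (ht : t + r ≤ s) :
    Icc (t + 1) (t + r) ∈ pathEdges r s := by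
  refine mem_image.mpr ⟨t + 1, mem_Icc.mpr ⟨by omega, by omega⟩, ?_⟩
  congr 1
  omega

theorem injOn_image_Icc {f : ℕ → ℕ} {r s : ℕ} (hr : 0 < r) (hf : Set.InjOn f (Icc 1 s)) :
    Set.InjOn (fun t => (Icc (t + 1) (t + r)).image f) {t | t + r ≤ s} := by
  intro t (ht : t + r ≤ s) u (hu : u + r ≤ s) htu
  have hwin : Icc (t + 1) (t + r) = Icc (u + 1) (u + r) :=
    image_injOn_powerset_of_injOn hf
      (mem_coe.mpr (mem_powerset.mpr (Icc_subset_Icc (Nat.le_add_left 1 t) ht)))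
      (mem_coe.mpr (mem_powerset.mpr (Icc_subset_Icc (Nat.le_add_left 1 u) hu))) htu
  have h1 : t + 1 ∈ Icc (u + 1) (u + r) := hwin ▸ mem_Icc.mpr ⟨le_rfl, by omega⟩
  have h2 : u + 1 ∈ Icc (t + 1) (t + r) := hwin.symm ▸ mem_Icc.mpr ⟨le_rfl, by omega⟩
  rw [mem_Icc] at h1 h2
  omega

theorem le_card_inter_blockEdges_of_isCopy {k m r : ℕ} (hk : 0 < k) (hm : 0 < m) (hr : 0 < r)
    {C : Finset (Finset ℕ)} (hC : IsCopy (k * m) (k * r) (pathEdges r (k * r)) C) :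
    k ≤ #(C ∩ blockEdges k m r) := by
  obtain ⟨f, hf, hfm, rfl⟩ := hC
  have hrk : r ≤ k * r := Nat.le_mul_of_pos_left r hk
  set G : ℕ → ℕ := fun t => (f (t + 1) - 1) / m
  have hG : MonotoneOn G (Set.Iio (k * r)) := fun i hi j hj hij =>
    Nat.div_le_div_right (Nat.sub_le_sub_right
      (hf.monotoneOn (by simp at hi ⊢; omega) (by simp at hj ⊢; omega) (by omega)) 1)
  have hlt : ∀ i < k * r, G i < k := fun i hi => by
    have := mem_Icc.mp (hfm (i + 1) (mem_Icc.mpr ⟨by omega, hi⟩))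
    exact (Nat.div_lt_iff_lt_mul hm).mpr (by omega)
  calc k ≤ #{t ∈ range (k * r - r + 1) | G t = G (t + (r - 1))} :=
        le_card_filter_eq_add_of_monotoneOn G hk hr hG hlt
    _ ≤ #((pathEdges r (k * r)).image (fun e => e.image f) ∩ blockEdges k m r) := by
        refine card_le_card_of_injOn (fun t => (Icc (t + 1) (t + r)).image f) (fun t ht => ?_)
          ((injOn_image_Icc hr hf.injOn).mono fun t ht => ?_)
        · simp only [mem_coe, mem_filter, mem_range] at ht
          refine mem_inter.mpr ⟨mem_image_of_mem _ (Icc_mem_pathEdges hr (by omega)), ?_⟩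
          refine image_Icc_mem_blockEdges hm hr hf hfm (by omega) ?_
          simpa [G, Nat.sub_add_cancel hr, add_assoc] using ht.2
        · simp only [mem_coe, mem_filter, mem_range] at ht
          exact (show t + r ≤ k * r by omega)

theorem isFracTransversal_blockWeight {k m r : ℕ} (hk : 0 < k) (hm : 0 < m) (hr : 0 < r) :
    IsFracTransversal (k * m) r (k * r) (pathEdges r (k * r)) (blockWeight k m r) := by
  refine ⟨fun e _ => ?_, fun C hC => ?_⟩
  · unfold blockWeight
    positivity
  · rw [sum_blockWeight, le_div_iff₀ (by exact_mod_cast hk), one_mul]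
    exact_mod_cast le_card_inter_blockEdges_of_isCopy hk hm hr hC

theorem tauStar_le_sum {n r s : ℕ} {E : Finset (Finset ℕ)} {w : Finset ℕ → ℝ}
    (hw : IsFracTransversal n r s E w) :
    tauStar n r s E ≤ ∑ e ∈ (Icc 1 n).powersetCard r, w e :=
  csInf_le ⟨0, by rintro x ⟨w', hw', rfl⟩; exact sum_nonneg hw'.1⟩ ⟨w, hw, rfl⟩

theorem stmt7_general (r s k n : ℕ) (hdvd : r ∣ s) (hk : k = s / r)
    (hn : 0 < n) (hkn : k ∣ n) :
    (∃ w : Finset ℕ → ℝ, IsFracTransversal n r s (pathEdges r s) w ∧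
      ∑ e ∈ (Finset.Icc 1 n).powersetCard r, w e = ((n / k).choose r : ℝ)) ∧
    tauStar n r s (pathEdges r s) ≤ ((n / k).choose r : ℝ) := by
  obtain ⟨m, rfl⟩ := hkn
  have hk0 : 0 < k := Nat.pos_of_mul_pos_right hn
  have hm0 : 0 < m := Nat.pos_of_mul_pos_left hn
  have hr0 : 0 < r := Nat.pos_of_ne_zero fun hr => by simp [hr] at hk; omega
  obtain rfl : s = k * r := by rw [hk, Nat.div_mul_cancel hdvd]
  rw [Nat.mul_div_cancel_left m hk0]
  have hw := isFracTransversal_blockWeight hk0 hm0 hr0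
  have hsum := sum_blockWeight_powersetCard hk0 hm0 hr0
  exact ⟨⟨_, hw, hsum⟩, hsum ▸ tauStar_le_sum hw⟩

/-- If `2 ≤ r ≤ s`, `r ∣ s`, `k = s/r` and `k ∣ n` with `n > 0`, then there is a
fractional `P^{(r)}_s`-transversal of `K^{(r)}_n` of total weight `C(n/k, r)`; in particular
`τ*(n, P^{(r)}_s) ≤ C(n/k, r)`. -/
theorem stmt7 (r s k n : ℕ) (hr : 2 ≤ r) (hrs : r ≤ s) (hdvd : r ∣ s) (hk : k = s / r)
    (hn : 0 < n) (hkn : k ∣ n) :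
    (∃ w : Finset ℕ → ℝ, IsFracTransversal n r s (pathEdges r s) w ∧
      ∑ e ∈ (Finset.Icc 1 n).powersetCard r, w e = ((n / k).choose r : ℝ)) ∧
    tauStar n r s (pathEdges r s) ≤ ((n / k).choose r : ℝ) :=
  stmt7_general r s k n hdvd hk hn hkn
end

section
/- For all integers s ≥ 3 and n ≥ 1, ex(n, P^{(3)}_s) = f(n, s−2). -/
open Finset
open scoped Classical

/-!
For a `P^{(3)}_s`-free `G`, label a pair `u < v` by `k - 1`, where `k` is the largest number of
vertices of a tight path of `G` ending with `u, v`. The labels lie in `[1, s - 2]` and every edge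
of `G` becomes a good triple, so `|G| ≤ f(n, s - 2)`. Conversely, labels strictly increase along a
tight path of good triples, so the good triples of a labeling with values in `[1, s - 2]` contain
no tight path on `s` vertices, and `f(n, s - 2) ≤ ex(n, P^{(3)}_s)`.
-/

lemma exists_lt_lt_eq_of_card_eq_three {e : Finset ℕ} (h : e.card = 3) :
    ∃ a b c, a < b ∧ b < c ∧ e = {a, b, c} := by
  set g := e.orderEmbOfFin h
  refine ⟨g 0, g 1, g 2, g.strictMono (by decide), g.strictMono (by decide), ?_⟩
  conv_lhs => rw [← e.image_orderEmbOfFin_univ h]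
  simp [Fin.univ_succ, g]

lemma eq_of_insert_eq_of_lt {a b c u v w : ℕ} (hab : a < b) (hbc : b < c) (huv : u < v)
    (hvw : v < w) (h : ({a, b, c} : Finset ℕ) = {u, v, w}) : a = u ∧ b = v ∧ c = w := by
  have H := Finset.ext_iff.mp h
  simp only [mem_insert, mem_singleton] at H
  have := H a; have := H b; have := H c; have := H u; have := H v; have := H w
  omega

lemma image_pathEdges_subset_iff {s : ℕ} (hs : 3 ≤ s) (f : ℕ → ℕ) (G : Finset (Finset ℕ)) :
    (pathEdges 3 s).image (fun e => e.image f) ⊆ G ↔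
      ∀ i ∈ Icc 1 (s - 2), ({f i, f (i + 1), f (i + 2)} : Finset ℕ) ∈ G := by
  have himage : ∀ i, (Icc i (i + 3 - 1)).image f = {f i, f (i + 1), f (i + 2)} := by
    intro i
    rw [show Icc i (i + 3 - 1) = {i, i + 1, i + 2} by
      ext; simp only [mem_Icc, mem_insert, mem_singleton]; omega]
    simp [image_insert]
  simp only [pathEdges, image_image, image_subset_iff, Function.comp_def, himage]
  rw [show s - 3 + 1 = s - 2 by omega]

def goodTriples (n : ℕ) (φ : ℕ → ℕ → ℕ) : Finset (Finset ℕ) :=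
  (((Icc 1 n) ×ˢ (Icc 1 n) ×ˢ (Icc 1 n)).filter
    (fun p => p.1 < p.2.1 ∧ p.2.1 < p.2.2 ∧ φ p.1 p.2.1 < φ p.2.1 p.2.2)).image
    (fun p => {p.1, p.2.1, p.2.2})

lemma card_goodTriples (n : ℕ) (φ : ℕ → ℕ → ℕ) : (goodTriples n φ).card = goodCount n φ := by
  refine card_image_of_injOn ?_
  rintro ⟨a, b, c⟩ hp ⟨u, v, w⟩ hq h
  simp only [mem_coe, mem_filter] at hp hq
  obtain ⟨rfl, rfl, rfl⟩ := eq_of_insert_eq_of_lt hp.2.1 hp.2.2.1 hq.2.1 hq.2.2.1 h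
  rfl

lemma goodTriples_subset (n : ℕ) (φ : ℕ → ℕ → ℕ) :
    goodTriples n φ ⊆ (Icc 1 n).powersetCard 3 := by
  simp only [goodTriples, image_subset_iff, mem_filter, mem_product, mem_powersetCard]
  rintro ⟨a, b, c⟩ ⟨⟨ha, hb, hc⟩, hab, hbc, -⟩
  exact ⟨by simp [insert_subset_iff, ha, hb, hc],
    card_eq_three.mpr ⟨a, b, c, hab.ne, (hab.trans hbc).ne, hbc.ne, rfl⟩⟩

lemma insert_mem_goodTriples_iff {n a b c : ℕ} {φ : ℕ → ℕ → ℕ} (ha : a ∈ Icc 1 n)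
    (hb : b ∈ Icc 1 n) (hc : c ∈ Icc 1 n) (hab : a < b) (hbc : b < c) :
    {a, b, c} ∈ goodTriples n φ ↔ φ a b < φ b c := by
  constructor
  · simp only [goodTriples, mem_image, mem_filter]
    rintro ⟨⟨u, v, w⟩, ⟨-, huv, hvw, hφ⟩, h⟩
    obtain ⟨rfl, rfl, rfl⟩ := eq_of_insert_eq_of_lt huv hvw hab hbc h
    exact hφ
  · intro hφ
    exact mem_image.mpr ⟨(a, b, c), mem_filter.mpr ⟨by simp [ha, hb, hc], hab, hbc, hφ⟩, rfl⟩

lemma add_le_of_lt_add_one {a : ℕ → ℕ} {m : ℕ} (h : ∀ i ∈ Icc 1 m, a i < a (i + 1)) :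
    a 1 + m ≤ a (m + 1) := by
  induction m with
  | zero => simp
  | succ m ih =>
    have hprev := ih fun i hi => h i (by simp only [mem_Icc] at hi ⊢; omega)
    have hlast := h (m + 1) (by simp)
    omega

lemma not_subset_goodTriples_of_isCopy {n s : ℕ} (hs : 3 ≤ s) {φ : ℕ → ℕ → ℕ}
    (hφ : IsLabeling n (s - 2) φ) {C : Finset (Finset ℕ)} (hC : IsCopy n s (pathEdges 3 s) C) :
    ¬ C ⊆ goodTriples n φ := by
  obtain ⟨f, hmono, hrange, rfl⟩ := hC
  rw [image_pathEdges_subset_iff hs]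
  intro hpath
  have hmem : ∀ i, 1 ≤ i → i ≤ s → f i ∈ Icc 1 n := fun i h1 h2 => hrange i (mem_Icc.mpr ⟨h1, h2⟩)
  have hlt : ∀ i, 1 ≤ i → i < s → f i < f (i + 1) := fun i h1 h2 =>
    hmono (by simp only [coe_Icc, Set.mem_Icc]; omega) (by simp only [coe_Icc, Set.mem_Icc]; omega)
      (by omega)
  have hincr : ∀ i ∈ Icc 1 (s - 2), φ (f i) (f (i + 1)) < φ (f (i + 1)) (f (i + 2)) := by
    intro i hi
    rw [mem_Icc] at hi
    exact (insert_mem_goodTriples_iff (hmem i (by omega) (by omega)) (hmem (i + 1) (by omega)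
      (by omega)) (hmem (i + 2) (by omega) (by omega)) (hlt i (by omega) (by omega))
      (hlt (i + 1) (by omega) (by omega))).mp (hpath i (mem_Icc.mpr hi))
  have hfirst := hφ (f 1) (f 2) (hmem 1 le_rfl (by omega)) (hmem 2 (by omega) (by omega))
    (hlt 1 le_rfl (by omega))
  have hlast := hφ (f (s - 1)) (f s) (hmem (s - 1) (by omega) (by omega)) (hmem s (by omega) le_rfl)
    (by simpa [show s - 1 + 1 = s by omega] using hlt (s - 1) (by omega) (by omega))
  have hgrowth := add_le_of_lt_add_one (a := fun i => φ (f i) (f (i + 1))) hincr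
  simp only [show s - 2 + 1 = s - 1 by omega, show s - 1 + 1 = s by omega, Nat.reduceAdd] at hgrowth
  simp only [mem_Icc] at hfirst hlast
  omega

/-- `pathLabel G u v + 1` is the largest number of vertices of a tight path of `G` ending with
`u < v`. -/
def pathLabel (G : Finset (Finset ℕ)) (u v : ℕ) : ℕ :=
  if h : u < v then
    1 + ((Ico 1 u).filter (fun x => ({x, u, v} : Finset ℕ) ∈ G)).sup (fun x => pathLabel G x u)
  else 0
termination_by v
decreasing_by exact h

lemma pathLabel_of_lt (G : Finset (Finset ℕ)) {u v : ℕ} (h : u < v) :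
    pathLabel G u v = 1 +
      ((Ico 1 u).filter (fun x => ({x, u, v} : Finset ℕ) ∈ G)).sup (fun x => pathLabel G x u) := by
  rw [pathLabel, dif_pos h]

lemma one_le_pathLabel (G : Finset (Finset ℕ)) {u v : ℕ} (h : u < v) : 1 ≤ pathLabel G u v := by
  rw [pathLabel_of_lt G h]
  exact Nat.le_add_right 1 _

lemma pathLabel_lt_pathLabel {G : Finset (Finset ℕ)} {u v w : ℕ} (hu : 1 ≤ u) (huv : u < v)
    (hvw : v < w) (hG : ({u, v, w} : Finset ℕ) ∈ G) : pathLabel G u v < pathLabel G v w := by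
  rw [pathLabel_of_lt G hvw, Nat.one_add, Nat.lt_succ_iff]
  exact le_sup (f := fun x => pathLabel G x v) (mem_filter.mpr ⟨mem_Ico.mpr ⟨hu, huv⟩, hG⟩)

lemma exists_tightPath_of_lt_pathLabel (G : Finset (Finset ℕ)) (t : ℕ) {u v : ℕ} (hu : 1 ≤ u)
    (huv : u < v) (ht : t < pathLabel G u v) :
    ∃ g : ℕ → ℕ, 1 ≤ g 1 ∧ g (t + 1) = u ∧ g (t + 2) = v ∧
      (∀ i ∈ Icc 1 (t + 1), g i < g (i + 1)) ∧
      ∀ i ∈ Icc 1 t, ({g i, g (i + 1), g (i + 2)} : Finset ℕ) ∈ G := by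
  induction t generalizing u v with
  | zero =>
    refine ⟨fun i => if i = 1 then u else v, by simp [hu], by simp, by simp, ?_, by simp⟩
    intro i hi
    obtain rfl : i = 1 := by simpa using hi
    simpa using huv
  | succ t ih =>
    rw [pathLabel_of_lt G huv, add_comm t] at ht
    obtain ⟨x, hx, hxt⟩ := Finset.lt_sup_iff.mp (Nat.lt_of_add_lt_add_left ht)
    rw [mem_filter, mem_Ico] at hx
    obtain ⟨g, hg1, hgx, hgu, hlt, hG⟩ := ih hx.1.1 hx.1.2 hxt
    refine ⟨fun i => if i ≤ t + 2 then g i else v, by simpa using hg1, by simpa using hgu, by simp,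
      ?_, ?_⟩
    · intro i hi
      rw [mem_Icc] at hi
      rcases lt_or_eq_of_le hi.2 with h | rfl
      · simp only [show i ≤ t + 2 by omega, show i + 1 ≤ t + 2 by omega, if_true]
        exact hlt i (mem_Icc.mpr ⟨hi.1, by omega⟩)
      · simp [hgu, huv]
    · intro i hi
      rw [mem_Icc] at hi
      rcases lt_or_eq_of_le hi.2 with h | rfl
      · simp only [show i ≤ t + 2 by omega, show i + 1 ≤ t + 2 by omega,
          show i + 2 ≤ t + 2 by omega, if_true]
        exact hG i (mem_Icc.mpr ⟨hi.1, by omega⟩)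
      · simpa [hgx, hgu] using hx.2

lemma pathLabel_le_of_pathFree {n s : ℕ} (hs : 3 ≤ s) {G : Finset (Finset ℕ)}
    (hfree : ∀ C, IsCopy n s (pathEdges 3 s) C → ¬ C ⊆ G) {u v : ℕ} (hu : 1 ≤ u) (huv : u < v)
    (hv : v ≤ n) : pathLabel G u v ≤ s - 2 := by
  by_contra! h
  obtain ⟨g, hg1, -, hgv, hlt, hG⟩ := exists_tightPath_of_lt_pathLabel G (s - 2) hu huv h
  rw [show s - 2 + 1 = s - 1 by omega] at hlt
  rw [show s - 2 + 2 = s by omega] at hgv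
  have hmono : StrictMonoOn g (Icc 1 s : Finset ℕ) := by
    rw [coe_Icc]
    refine strictMonoOn_of_lt_add_one Set.ordConnected_Icc fun i _ hi hi1 => hlt i ?_
    simp only [Set.mem_Icc, mem_Icc] at hi hi1 ⊢
    omega
  have hrange : ∀ i ∈ Icc 1 s, g i ∈ Icc 1 n := by
    intro i hi
    have hle := hmono.monotoneOn
    rw [mem_Icc] at hi ⊢
    exact ⟨hg1.trans (hle (by simp only [coe_Icc, Set.mem_Icc]; omega) (by simpa using hi) hi.1),
      (hle (by simpa using hi) (by simp only [coe_Icc, Set.mem_Icc]; omega) hi.2).trans (hgv ▸ hv)⟩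
  exact hfree _ ⟨g, hmono, hrange, rfl⟩ ((image_pathEdges_subset_iff hs g G).mpr hG)

lemma card_le_goodCount {n : ℕ} {G : Finset (Finset ℕ)} {φ : ℕ → ℕ → ℕ}
    (hG : G ⊆ (Icc 1 n).powersetCard 3)
    (hφ : ∀ a b c, 1 ≤ a → a < b → b < c → ({a, b, c} : Finset ℕ) ∈ G → φ a b < φ b c) :
    G.card ≤ goodCount n φ := by
  rw [← card_goodTriples]
  refine card_le_card fun e he => ?_
  obtain ⟨hsub, hcard⟩ := mem_powersetCard.mp (hG he)
  obtain ⟨a, b, c, hab, hbc, rfl⟩ := exists_lt_lt_eq_of_card_eq_three hcard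
  have ha : a ∈ Icc 1 n := hsub (by simp)
  rw [insert_mem_goodTriples_iff ha (hsub (by simp)) (hsub (by simp)) hab hbc]
  exact hφ a b c (mem_Icc.mp ha).1 hab hbc he

lemma goodCount_le_fmax {n k : ℕ} {φ : ℕ → ℕ → ℕ} (hφ : IsLabeling n k φ) :
    goodCount n φ ≤ fmax n k :=
  le_csSup ⟨(Icc 1 n ×ˢ Icc 1 n ×ˢ Icc 1 n).card, by
    rintro m ⟨ψ, -, rfl⟩
    exact card_filter_le _ _⟩ ⟨φ, hφ, rfl⟩

lemma card_le_exNum {n r s : ℕ} {E G : Finset (Finset ℕ)} (hG : G ⊆ (Icc 1 n).powersetCard r)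
    (hfree : ∀ C, IsCopy n s E C → ¬ C ⊆ G) : G.card ≤ exNum n r s E :=
  le_csSup ⟨((Icc 1 n).powersetCard r).card, by
    rintro m ⟨H, hH, -, rfl⟩
    exact card_le_card hH⟩ ⟨G, hG, hfree, rfl⟩

lemma card_le_fmax_of_pathFree {n s : ℕ} (hs : 3 ≤ s) {G : Finset (Finset ℕ)}
    (hG : G ⊆ (Icc 1 n).powersetCard 3) (hfree : ∀ C, IsCopy n s (pathEdges 3 s) C → ¬ C ⊆ G) :
    G.card ≤ fmax n (s - 2) := by
  have hlabel : IsLabeling n (s - 2) (pathLabel G) := fun u v hu hv huv =>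
    mem_Icc.mpr ⟨one_le_pathLabel G huv,
      pathLabel_le_of_pathFree hs hfree (mem_Icc.mp hu).1 huv (mem_Icc.mp hv).2⟩
  exact (card_le_goodCount hG fun _ _ _ ha hab hbc => pathLabel_lt_pathLabel ha hab hbc).trans
    (goodCount_le_fmax hlabel)

lemma goodCount_le_exNum {n s : ℕ} (hs : 3 ≤ s) {φ : ℕ → ℕ → ℕ} (hφ : IsLabeling n (s - 2) φ) :
    goodCount n φ ≤ exNum n 3 s (pathEdges 3 s) := by
  rw [← card_goodTriples]
  exact card_le_exNum (goodTriples_subset n φ) fun _ hC =>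
    not_subset_goodTriples_of_isCopy hs hφ hC

theorem stmt10_general (s n : ℕ) (hs : 3 ≤ s) :
    exNum n 3 s (pathEdges 3 s) = fmax n (s - 2) := by
  apply le_antisymm
  · refine csSup_le' ?_
    rintro m ⟨G, hG, hfree, rfl⟩
    exact card_le_fmax_of_pathFree hs hG hfree
  · refine csSup_le' ?_
    rintro m ⟨φ, hφ, rfl⟩
    exact goodCount_le_exNum hs hφ

/-- For all `s ≥ 3` and `n ≥ 1`, `ex(n, P^{(3)}_s) = f(n, s-2)`. -/
theorem stmt10 (s n : ℕ) (hs : 3 ≤ s) (hn : 1 ≤ n) :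
    exNum n 3 s (pathEdges 3 s) = fmax n (s - 2) :=
  stmt10_general s n hs
end

section
/- Let k ≥ 2 and n ≥ 1 be integers, and let φ be an optimal k-edge-labeling of the ordered complete graph on [n], i.e., φ has f(n,k) good triples. Then there is no triple u < v < w in [n] with φ(uv) = k and φ(vw) = 1. -/
open Finset
open scoped Classical

/-- For `k ≥ 2` and `n ≥ 1`, an optimal `k`-edge-labeling of `[n]` has no
triple `u < v < w` with `φ(uv) = k` and `φ(vw) = 1`. -/
theorem stmt16 (n k : ℕ) (hk : 2 ≤ k) (hn : 1 ≤ n) (φ : ℕ → ℕ → ℕ)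
    (hφ : IsLabeling n k φ) (hopt : goodCount n φ = fmax n k) :
    ¬ ∃ u v w : ℕ, u ∈ Finset.Icc 1 n ∧ v ∈ Finset.Icc 1 n ∧ w ∈ Finset.Icc 1 n ∧
      u < v ∧ v < w ∧ φ u v = k ∧ φ v w = 1 := by
  rintro ⟨u, v, w, hu, hv, hw, huv, hvw, hφuv, hφvw⟩
  set T : Finset (ℕ × ℕ × ℕ) :=
    (Finset.Icc 1 n) ×ˢ (Finset.Icc 1 n) ×ˢ (Finset.Icc 1 n) with hT
  -- choose u₀ minimal with φ u₀ v = k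
  have hUne : ((Finset.Icc 1 n).filter (fun a => a < v ∧ φ a v = k)).Nonempty :=
    ⟨u, by simp [hu, huv, hφuv]⟩
  set u₀ : ℕ := ((Finset.Icc 1 n).filter (fun a => a < v ∧ φ a v = k)).min' hUne with hu₀def
  have hu₀U : u₀ ∈ (Finset.Icc 1 n).filter (fun a => a < v ∧ φ a v = k) :=
    Finset.min'_mem _ hUne
  rw [Finset.mem_filter] at hu₀U
  obtain ⟨hu₀mem, hu₀v, hφu₀v⟩ := hu₀U
  have hu₀min : ∀ a, a ∈ Finset.Icc 1 n → a < u₀ → φ a v < k := by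
    intro a ha hau₀
    have hav : a < v := lt_trans hau₀ hu₀v
    have hb := hφ a v ha hv hav
    rw [Finset.mem_Icc] at hb
    rcases lt_or_eq_of_le hb.2 with h | h
    · exact h
    · exfalso
      have : u₀ ≤ a := Finset.min'_le _ a (by simp [ha, hav, h])
      omega
  -- choose w₀ maximal with φ v w₀ = 1
  have hWne : ((Finset.Icc 1 n).filter (fun b => v < b ∧ φ v b = 1)).Nonempty :=
    ⟨w, by simp [hw, hvw, hφvw]⟩
  set w₀ : ℕ := ((Finset.Icc 1 n).filter (fun b => v < b ∧ φ v b = 1)).max' hWne with hw₀def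
  have hw₀W : w₀ ∈ (Finset.Icc 1 n).filter (fun b => v < b ∧ φ v b = 1) :=
    Finset.max'_mem _ hWne
  rw [Finset.mem_filter] at hw₀W
  obtain ⟨hw₀mem, hvw₀, hφvw₀⟩ := hw₀W
  have hw₀max : ∀ b, b ∈ Finset.Icc 1 n → w₀ < b → 2 ≤ φ v b := by
    intro b hb hw₀b
    have hvb : v < b := lt_trans hvw₀ hw₀b
    have hb2 := hφ v b hv hb hvb
    rw [Finset.mem_Icc] at hb2
    rcases eq_or_lt_of_le hb2.1 with h | h
    · exfalso
      have : b ≤ w₀ := Finset.le_max' _ b (by simp [hb, hvb, h.symm])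
      omega
    · omega
  -- the improved labeling
  set ψ : ℕ → ℕ → ℕ := fun x y =>
    if x = u₀ ∧ y = v then 1 else if x = v ∧ y = w₀ then k else φ x y with hψdef
  have hψ1 : ψ u₀ v = 1 := by simp [hψdef]
  have hψ2 : ψ v w₀ = k := by
    have h1 : ¬(v = u₀ ∧ w₀ = v) := by rintro ⟨h, -⟩; omega
    simp [hψdef, h1]
  have hψo : ∀ x y, ¬(x = u₀ ∧ y = v) → ¬(x = v ∧ y = w₀) → ψ x y = φ x y := by
    intro x y h1 h2; simp [hψdef, h1, h2]
  have hψlab : IsLabeling n k ψ := by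
    intro x y hx hy hxy
    by_cases h1 : x = u₀ ∧ y = v
    · rw [h1.1, h1.2, hψ1, Finset.mem_Icc]; omega
    · by_cases h2 : x = v ∧ y = w₀
      · rw [h2.1, h2.2, hψ2, Finset.mem_Icc]; omega
      · rw [hψo x y h1 h2]; exact hφ x y hx hy hxy
  -- the injection
  set F : ℕ × ℕ × ℕ → ℕ × ℕ × ℕ := fun p =>
    if p.2.1 = u₀ ∧ p.2.2 = v then (p.1, v, w₀)
    else if p.1 = v ∧ p.2.1 = w₀ then (u₀, v, p.2.2) else p with hFdef
  have hgφ : goodCount n φ =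
      (T.filter (fun p => p.1 < p.2.1 ∧ p.2.1 < p.2.2 ∧ φ p.1 p.2.1 < φ p.2.1 p.2.2)).card :=
    rfl
  have hgψ : goodCount n ψ =
      (T.filter (fun p => p.1 < p.2.1 ∧ p.2.1 < p.2.2 ∧ ψ p.1 p.2.1 < ψ p.2.1 p.2.2)).card :=
    rfl
  set sφ := T.filter (fun p => p.1 < p.2.1 ∧ p.2.1 < p.2.2 ∧ φ p.1 p.2.1 < φ p.2.1 p.2.2)
    with hsφ
  set sψ := T.filter (fun p => p.1 < p.2.1 ∧ p.2.1 < p.2.2 ∧ ψ p.1 p.2.1 < ψ p.2.1 p.2.2)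
    with hsψ
  have hextra : (u₀, v, w₀) ∉ sφ := by
    rw [hsφ, Finset.mem_filter]
    rintro ⟨-, -, -, hlt⟩
    simp only at hlt
    rw [hφu₀v, hφvw₀] at hlt
    omega
  -- membership characterization
  have hmemchar : ∀ p : ℕ × ℕ × ℕ, p ∈ insert (u₀, v, w₀) sφ →
      p = (u₀, v, w₀) ∨ (p.1 < p.2.1 ∧ p.2.1 < p.2.2 ∧
        p.1 ∈ Finset.Icc 1 n ∧ p.2.1 ∈ Finset.Icc 1 n ∧ p.2.2 ∈ Finset.Icc 1 n ∧
        φ p.1 p.2.1 < φ p.2.1 p.2.2) := by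
    intro p hp
    rcases Finset.mem_insert.1 hp with h | h
    · exact Or.inl h
    · right
      rw [hsφ, Finset.mem_filter] at h
      obtain ⟨hbox, h1, h2, h3⟩ := h
      rw [hT] at hbox
      simp only [Finset.mem_product] at hbox
      exact ⟨h1, h2, hbox.1, hbox.2.1, hbox.2.2, h3⟩
  -- characterize images
  have hchar : ∀ p : ℕ × ℕ × ℕ, p ∈ insert (u₀, v, w₀) sφ →
      (∃ a, a < u₀ ∧ a ∈ Finset.Icc 1 n ∧ p = (a, u₀, v) ∧ F p = (a, v, w₀)) ∨
      (∃ c, w₀ < c ∧ c ∈ Finset.Icc 1 n ∧ p = (v, w₀, c) ∧ F p = (u₀, v, c)) ∨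
      (F p = p) := by
    rintro ⟨a, b, c⟩ hp
    have hpm := hmemchar _ hp
    simp only at hpm
    by_cases hg1 : b = u₀ ∧ c = v
    · left
      obtain ⟨hb, hc⟩ := hg1
      have hne : ¬ ((a, b, c) = ((u₀, v, w₀) : ℕ × ℕ × ℕ)) := by
        simp only [Prod.mk.injEq]
        rintro ⟨-, h2, -⟩; omega
      rcases hpm with h | h
      · exact absurd h hne
      · refine ⟨a, by omega, h.2.2.1, ?_, ?_⟩
        · rw [hb, hc]
        · simp [hFdef, hb, hc]
    · by_cases hg2 : a = v ∧ b = w₀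
      · right; left
        obtain ⟨ha, hb⟩ := hg2
        have hne : ¬ ((a, b, c) = ((u₀, v, w₀) : ℕ × ℕ × ℕ)) := by
          simp only [Prod.mk.injEq]
          rintro ⟨h1, -, -⟩; omega
        rcases hpm with h | h
        · exact absurd h hne
        · have hwne : ¬ (w₀ = u₀) := by omega
          refine ⟨c, by omega, h.2.2.2.2.1, ?_, ?_⟩
          · rw [ha, hb]
          · simp only [hFdef, ha, hb]
            simp [hwne]
      · right; right
        simp only [hFdef]
        simp [hg1, hg2]
  -- map property
  have hmaps : ∀ p ∈ insert (u₀, v, w₀) sφ, F p ∈ sψ := by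
    intro p hp
    have hpm := hmemchar _ hp
    rcases hchar p hp with ⟨a, ha, haI, hpe, hFp⟩ | ⟨c, hc, hcI, hpe, hFp⟩ | hFp
    · rw [hFp, hsψ, Finset.mem_filter]
      have hav : a < v := by omega
      have hψav : ψ a v = φ a v := by
        apply hψo
        · rintro ⟨h, -⟩; omega
        · rintro ⟨h, -⟩; omega
      refine ⟨?_, by simpa using hav, by simpa using hvw₀, ?_⟩
      · rw [hT]; simp only [Finset.mem_product]; exact ⟨haI, hv, hw₀mem⟩
      · simp only
        rw [hψav, hψ2]
        exact hu₀min a haI ha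
    · rw [hFp, hsψ, Finset.mem_filter]
      have hvc : v < c := by omega
      have hψvc : ψ v c = φ v c := by
        apply hψo
        · rintro ⟨h, -⟩; omega
        · rintro ⟨-, h⟩; omega
      refine ⟨?_, by simpa using hu₀v, by simpa using hvc, ?_⟩
      · rw [hT]; simp only [Finset.mem_product]; exact ⟨hu₀mem, hv, hcI⟩
      · simp only
        rw [hψ1, hψvc]
        have := hw₀max c hcI hc
        omega
    · rw [hFp, hsψ, Finset.mem_filter]
      rcases hpm with h | h
      · rw [h]
        refine ⟨?_, by simpa using hu₀v, by simpa using hvw₀, ?_⟩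
        · rw [hT]; simp only [Finset.mem_product]; exact ⟨hu₀mem, hv, hw₀mem⟩
        · simp only
          rw [hψ1, hψ2]; omega
      · obtain ⟨h1, h2, haI, hbI, hcI, hlt⟩ := h
        have hψab : ψ p.1 p.2.1 = φ p.1 p.2.1 := by
          apply hψo
          · rintro ⟨ha, hb⟩
            rw [ha, hb] at hlt
            rw [hb] at hbI h2
            rw [hφu₀v] at hlt
            have := hφ v p.2.2 hbI hcI h2
            rw [Finset.mem_Icc] at this
            omega
          · rintro ⟨ha, hb⟩
            -- then p = (v, w₀, c) but F p = p means guard 2 was false unless guard1 held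
            -- use: φ v w₀ = 1 and φ p.1 p.2.1 < φ p.2.1 p.2.2 is fine; need other route:
            -- unless guard1 also false... but F p = p could coincide. Use values:
            -- no contradiction from values here; derive from hFp instead.
            exfalso
            by_cases hg1 : p.2.1 = u₀ ∧ p.2.2 = v
            · have hwu : w₀ = u₀ := by rw [← hb, hg1.1]
              omega
            · have : F p = (u₀, v, p.2.2) := by
                simp only [hFdef]
                rw [if_neg hg1, if_pos ⟨ha, hb⟩]
              rw [hFp] at this
              have hpv : p.1 = u₀ := by
                rw [this]
              omega
        have hψbc : ψ p.2.1 p.2.2 = φ p.2.1 p.2.2 := by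
          apply hψo
          · rintro ⟨ha, hb⟩
            exfalso
            have : F p = (p.1, v, w₀) := by
              simp only [hFdef]
              rw [if_pos ⟨ha, hb⟩]
            rw [hFp] at this
            have : p.2.2 = w₀ := by rw [this]
            rw [hb] at this
            omega
          · rintro ⟨ha, hb⟩
            rw [ha, hb] at hlt
            rw [ha] at hbI h1
            rw [hφvw₀] at hlt
            have := hφ p.1 v haI hbI h1
            rw [Finset.mem_Icc] at this
            omega
        refine ⟨?_, h1, h2, ?_⟩
        · rw [hT]; simp only [Finset.mem_product]; exact ⟨haI, hbI, hcI⟩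
        · rw [hψab, hψbc]; exact hlt
  -- injectivity
  have hinj : Set.InjOn F (insert (u₀, v, w₀) sφ : Finset (ℕ × ℕ × ℕ)) := by
    intro p hp' q hq' hFeq
    have hp : p ∈ insert (u₀, v, w₀) sφ := by simpa using hp'
    have hq : q ∈ insert (u₀, v, w₀) sφ := by simpa using hq'
    have noid1 : ∀ r : ℕ × ℕ × ℕ, r ∈ insert (u₀, v, w₀) sφ →
        ∀ a : ℕ, a < u₀ → r ≠ (a, v, w₀) := by
      intro r hr a ha hre
      rcases hmemchar r hr with h | h
      · rw [hre] at h
        simp only [Prod.mk.injEq] at h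
        omega
      · rw [hre] at h
        simp only at h
        obtain ⟨-, -, haI', -, -, hlt'⟩ := h
        rw [hφvw₀] at hlt'
        have := hφ a v haI' hv (by omega)
        rw [Finset.mem_Icc] at this
        omega
    have noid2 : ∀ r : ℕ × ℕ × ℕ, r ∈ insert (u₀, v, w₀) sφ →
        ∀ c : ℕ, w₀ < c → r ≠ (u₀, v, c) := by
      intro r hr c hc hre
      rcases hmemchar r hr with h | h
      · rw [hre] at h
        simp only [Prod.mk.injEq] at h
        omega
      · rw [hre] at h
        simp only at h
        obtain ⟨-, -, -, -, hcI', hlt'⟩ := h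
        rw [hφu₀v] at hlt'
        have := hφ v c hv hcI' (by omega)
        rw [Finset.mem_Icc] at this
        omega
    rcases hchar p hp with ⟨a, ha, _, hpe, hFp⟩ | ⟨c, hc, _, hpe, hFp⟩ | hFp <;>
      rcases hchar q hq with ⟨a', ha', _, hqe, hFq⟩ | ⟨c', hc', _, hqe, hFq⟩ | hFq
    · rw [hFp, hFq] at hFeq
      simp only [Prod.mk.injEq] at hFeq
      rw [hpe, hqe, hFeq.1]
    · rw [hFp, hFq] at hFeq
      simp only [Prod.mk.injEq] at hFeq
      omega
    · rw [hFp, hFq] at hFeq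
      exact absurd hFeq.symm (noid1 q hq a ha)
    · rw [hFp, hFq] at hFeq
      simp only [Prod.mk.injEq] at hFeq
      omega
    · rw [hFp, hFq] at hFeq
      simp only [Prod.mk.injEq] at hFeq
      rw [hpe, hqe, hFeq.2.2]
    · rw [hFp, hFq] at hFeq
      exact absurd hFeq.symm (noid2 q hq c hc)
    · rw [hFp, hFq] at hFeq
      exact absurd hFeq (noid1 p hp a' ha')
    · rw [hFp, hFq] at hFeq
      exact absurd hFeq (noid2 p hp c' hc')
    · rw [hFp, hFq] at hFeq
      exact hFeq
  -- conclude
  have hcard : goodCount n φ + 1 ≤ goodCount n ψ := by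
    rw [hgφ, hgψ]
    calc sφ.card + 1 = (insert (u₀, v, w₀) sφ).card :=
          (Finset.card_insert_of_notMem hextra).symm
      _ ≤ sψ.card := Finset.card_le_card_of_injOn F hmaps hinj
  have hbdd : BddAbove {m | ∃ f : ℕ → ℕ → ℕ, IsLabeling n k f ∧ goodCount n f = m} := by
    refine ⟨T.card, ?_⟩
    rintro m ⟨f, -, rfl⟩
    exact Finset.card_filter_le _ _
  have hle : goodCount n ψ ≤ fmax n k :=
    le_csSup hbdd ⟨ψ, hψlab, rfl⟩
  omega
end

section
/- Let k ≥ 1 and n ≥ 2 be integers and let φ be a monotone k-edge-labeling of the ordered complete graph on [n]. Then for every i with 0 ≤ i ≤ k+1, the symmetric difference of X_i and X̂_i has size at most 2; in particular ||X_i| − |X̂_i|| ≤ 2. -/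
open Finset
open scoped Classical

lemma phiL_le_phiR (n k : ℕ) (φ : ℕ → ℕ → ℕ) (hφ : IsLabeling n k φ)
    (hmono : IsMonotone n φ) (v : ℕ) (hv : v ∈ Finset.Icc 1 n) :
    PhiL φ v ≤ PhiR n k φ v := by
  rw [Finset.mem_Icc] at hv
  rcases eq_or_ne v n with rfl | hvn
  · rw [PhiR, if_pos rfl]
    apply Finset.sup_le
    intro u hu
    rw [Finset.mem_Ico] at hu
    have := hφ u v (Finset.mem_Icc.2 ⟨hu.1, by omega⟩) (Finset.mem_Icc.2 ⟨by omega, le_rfl⟩) hu.2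
    rw [Finset.mem_Icc] at this
    omega
  · have hvlt : v < n := lt_of_le_of_ne hv.2 hvn
    rw [PhiR, if_neg hvn]
    have hne : {m | ∃ w ∈ Finset.Ioc v n, φ v w = m}.Nonempty :=
      ⟨φ v n, n, Finset.mem_Ioc.2 ⟨hvlt, le_rfl⟩, rfl⟩
    obtain ⟨w₀, hw₀, heq⟩ := Nat.sInf_mem hne
    rw [Finset.mem_Ioc] at hw₀
    rw [← heq]
    apply Finset.sup_le
    intro u hu
    rw [Finset.mem_Ico] at hu
    exact hmono u v w₀ (Finset.mem_Icc.2 ⟨hu.1, by omega⟩) (Finset.mem_Icc.2 ⟨by omega, hv.2⟩)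
      (Finset.mem_Icc.2 ⟨by omega, hw₀.2⟩) hu.2 hw₀.1

lemma phiR_le_phiL (n k : ℕ) (φ : ℕ → ℕ → ℕ) (v w : ℕ) (hv : v ∈ Finset.Icc 1 n)
    (hw : w ∈ Finset.Icc 1 n) (hvw : v < w) :
    PhiR n k φ v ≤ PhiL φ w := by
  rw [Finset.mem_Icc] at hv hw
  have hvn : v ≠ n := by omega
  rw [PhiR, if_neg hvn]
  have h1 : sInf {m | ∃ x ∈ Finset.Ioc v n, φ v x = m} ≤ φ v w :=
    Nat.sInf_le ⟨w, Finset.mem_Ioc.2 ⟨hvw, hw.2⟩, rfl⟩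
  have h2 : φ v w ≤ PhiL φ w := Finset.le_sup (f := fun u => φ u w) (Finset.mem_Ico.2 ⟨hv.1, hvw⟩)
  omega

/-- For a monotone `k`-edge-labeling of `[n]` (`k ≥ 1`, `n ≥ 2`) and every
`0 ≤ i ≤ k+1`, the symmetric difference of `X_i` and `X̂_i` has size at most 2; in particular
`||X_i| - |X̂_i|| ≤ 2`. -/
theorem stmt17 (n k : ℕ) (hk : 1 ≤ k) (hn : 2 ≤ n) (φ : ℕ → ℕ → ℕ)
    (hφ : IsLabeling n k φ) (hmono : IsMonotone n φ) :
    ∀ i ≤ k + 1,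
      ((XL n φ i \ XR n k φ i) ∪ (XR n k φ i \ XL n φ i)).card ≤ 2 ∧
      |((XL n φ i).card : ℤ) - ((XR n k φ i).card : ℤ)| ≤ 2 := by
  intro i hi
  have key1 : ∀ a b, a ∈ XL n φ i \ XR n k φ i → b ∈ XL n φ i \ XR n k φ i → a < b → False := by
    intro a b ha hb hab
    rw [Finset.mem_sdiff] at ha hb
    obtain ⟨ha1, ha2⟩ := ha
    obtain ⟨hb1, hb2⟩ := hb
    rw [XL, Finset.mem_filter] at ha1 hb1
    have hRa : PhiR n k φ a ≠ i := by
      intro h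
      exact ha2 (by rw [XR, Finset.mem_filter]; exact ⟨ha1.1, h⟩)
    have h1 := phiL_le_phiR n k φ hφ hmono a ha1.1
    have h2 := phiR_le_phiL n k φ a b ha1.1 hb1.1 hab
    omega
  have key2 : ∀ a b, a ∈ XR n k φ i \ XL n φ i → b ∈ XR n k φ i \ XL n φ i → a < b → False := by
    intro a b ha hb hab
    rw [Finset.mem_sdiff] at ha hb
    obtain ⟨ha1, ha2⟩ := ha
    obtain ⟨hb1, hb2⟩ := hb
    rw [XR, Finset.mem_filter] at ha1 hb1
    have hLb : PhiL φ b ≠ i := by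
      intro h
      exact hb2 (by rw [XL, Finset.mem_filter]; exact ⟨hb1.1, h⟩)
    have h1 := phiL_le_phiR n k φ hφ hmono b hb1.1
    have h2 := phiR_le_phiL n k φ a b ha1.1 hb1.1 hab
    omega
  have hA : (XL n φ i \ XR n k φ i).card ≤ 1 := by
    rw [Finset.card_le_one]
    intro a ha b hb
    by_contra hne
    rcases Ne.lt_or_gt hne with h | h
    · exact key1 a b ha hb h
    · exact key1 b a hb ha h
  have hB : (XR n k φ i \ XL n φ i).card ≤ 1 := by
    rw [Finset.card_le_one]
    intro a ha b hb
    by_contra hne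
    rcases Ne.lt_or_gt hne with h | h
    · exact key2 a b ha hb h
    · exact key2 b a hb ha h
  constructor
  · calc ((XL n φ i \ XR n k φ i) ∪ (XR n k φ i \ XL n φ i)).card
        ≤ (XL n φ i \ XR n k φ i).card + (XR n k φ i \ XL n φ i).card :=
          Finset.card_union_le _ _
      _ ≤ 2 := by omega
  · have e1 := Finset.card_sdiff_add_card_inter (XL n φ i) (XR n k φ i)
    have e2 := Finset.card_sdiff_add_card_inter (XR n k φ i) (XL n φ i)
    have e3 : (XR n k φ i ∩ XL n φ i).card = (XL n φ i ∩ XR n k φ i).card := by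
      rw [Finset.inter_comm]
    rw [abs_le]
    omega
end
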